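/- Let f : 𝕋^d → ℝ be a smooth periodic function, 0 < θ ≤ 1, and 0 < Q ≤ r ≤ 1. Then there exists a constant C > 0 depending only on d and θ such that for every x ∈ 𝕋^d, Q^{−d} ∫_{B_Q(x)} |f(x) − f(z)| / d(x,z)^θ dz ≤ C · (M_r^{1−θ}|∇f|)(x), where B_Q(x) denotes the (periodic) ball of radius Q centered at x. -/

import Mathlib

open MeasureTheory Real
open scoped ENNReal RealInnerProductSpace

noncomputable section

/-- Euclidean space `ℝ^d`; periodic functions on it model functions on the torus `𝕋^d`. -/
abbrev Ed (d : ℕ) : Type := EuclideanSpace ℝ (Fin d)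

/-- The point of `ℝ^d` associated to an integer vector `n ∈ ℤ^d`. -/
def intVec (d : ℕ) (n : Fin d → ℤ) : Ed d := WithLp.toLp 2 (fun i => (n i : ℝ))

/-- `ℤ^d`-periodicity: the model for functions defined on the torus `𝕋^d = ℝ^d/ℤ^d`. -/
def IsPeriodic {d : ℕ} {α : Type*} (f : Ed d → α) : Prop :=
  ∀ (x : Ed d) (n : Fin d → ℤ), f (x + intVec d n) = f x

/-- The fundamental domain `[0,1)^d` of the torus. -/
def unitBox (d : ℕ) : Set (Ed d) := {x | ∀ i, x i ∈ Set.Ico (0 : ℝ) 1}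

/-- The geodesic (periodic) distance on the torus `𝕋^d`. -/
def perDist {d : ℕ} (x y : Ed d) : ℝ := ⨅ n : Fin d → ℤ, ‖x - y + intVec d n‖

/-- `ρ₊ = 2 max(ρ,0)`. -/
def rhoPlus {d : ℕ} (ρ : Ed d → ℝ) : Ed d → ℝ := fun x => 2 * max (ρ x) 0

/-- `ρ₋ = -2 min(ρ,0)`. -/
def rhoMinus {d : ℕ} (ρ : Ed d → ℝ) : Ed d → ℝ := fun x => -(2 * min (ρ x) 0)

/-- `γ` is a coupling (transport plan) between the probability densities `ρ₀, ρ₁` on the torus. -/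
def IsCoupling {d : ℕ} (ρ₀ ρ₁ : Ed d → ℝ) (γ : Measure (Ed d × Ed d)) : Prop :=
  IsProbabilityMeasure γ ∧
  γ.map Prod.fst
    = (volume.restrict (unitBox d)).withDensity (fun x => ENNReal.ofReal (ρ₀ x)) ∧
  γ.map Prod.snd
    = (volume.restrict (unitBox d)).withDensity (fun y => ENNReal.ofReal (ρ₁ y))

/-- The Monge–Kantorovich–Rubinstein distance with cost function `σ`. -/
def MKRDist {d : ℕ} (σ : ℝ → ℝ) (ρ₀ ρ₁ : Ed d → ℝ) : ℝ :=
  sInf { c | ∃ γ : Measure (Ed d × Ed d), IsCoupling ρ₀ ρ₁ γ ∧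
    c = ∫ q, σ (perDist q.1 q.2) ∂γ }

/-- The MKR mixing measure `D(ρ) = exp (d_ln (ρ₊, ρ₋))`. -/
def mixD {d : ℕ} (ρ : Ed d → ℝ) : ℝ :=
  Real.exp (MKRDist Real.log (rhoPlus ρ) (rhoMinus ρ))

/-- The homogeneous `Ḣ^{-1}` norm on the torus. -/
def negSob {d : ℕ} (ρ : Ed d → ℝ) : ℝ :=
  sSup { c | ∃ ζ : Ed d → ℝ, ContDiff ℝ (⊤ : ℕ∞) ζ ∧ IsPeriodic ζ ∧
    (∫ x in unitBox d, ‖gradient ζ x‖ ^ 2) ≤ 1 ∧ c = ∫ x in unitBox d, ρ x * ζ x }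

/-- The divergence of a vector field on `ℝ^d`. -/
def divg {d : ℕ} (ζ : Ed d → Ed d) (x : Ed d) : ℝ :=
  ∑ i, fderiv ℝ ζ x (EuclideanSpace.single i (1 : ℝ)) i

/-- The set of test values defining the `BV` seminorm. -/
def bvSet {d : ℕ} (ρ : Ed d → ℝ) : Set ℝ :=
  { c | ∃ ζ : Ed d → Ed d, ContDiff ℝ 1 ζ ∧ IsPeriodic ζ ∧ (∀ x, ‖ζ x‖ ≤ 1) ∧
      c = ∫ x in unitBox d, ρ x * divg ζ x }

/-- The total variation (`BV`) seminorm `[ρ]_{BV}` on the torus. -/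
def bvNorm {d : ℕ} (ρ : Ed d → ℝ) : ℝ := sSup (bvSet ρ)

/-- `[ρ]_{BV} < ∞`. -/
def HasFiniteBV {d : ℕ} (ρ : Ed d → ℝ) : Prop := BddAbove (bvSet ρ)

/-- `ρ` is a distributional (weak) solution of `∂ₜ ρ + u ⋅ ∇ρ = 0` on `(0,∞) × 𝕋^d`
with initial datum `ρ(0,⋅)` (for divergence-free `u` this is the weak formulation of the
continuity equation, tested against smooth periodic test functions vanishing for large times). -/
def IsWeakSolution {d : ℕ} (u : ℝ → Ed d → Ed d) (ρ : ℝ → Ed d → ℝ) : Prop :=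
  ∀ φ : ℝ → Ed d → ℝ,
    ContDiff ℝ (⊤ : ℕ∞) (fun q : ℝ × Ed d => φ q.1 q.2) →
    (∀ t, IsPeriodic (φ t)) →
    (∃ T : ℝ, ∀ t ≥ T, ∀ x, φ t x = 0) →
    (∫ t in Set.Ioi (0 : ℝ), ∫ x in unitBox d,
        ρ t x * (deriv (fun s => φ s x) t + (inner ℝ (u t x) (gradient (φ t) x) : ℝ)))
      + (∫ x in unitBox d, ρ 0 x * φ 0 x) = 0

/-- The viscous dissipation `‖∇u(t,⋅)‖_{L^p(𝕋^d)}` at time `t`. -/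
def dissip {d : ℕ} (p : ℝ≥0∞) (u : ℝ → Ed d → Ed d) (t : ℝ) : ℝ :=
  (eLpNorm (fun x => fderiv ℝ (u t) x) p (volume.restrict (unitBox d))).toReal

/-- The weighted local maximal function `M_r^τ g`. -/
def wMax {d : ℕ} (r τ : ℝ) (g : Ed d → ℝ) (x : Ed d) : ℝ :=
  ⨆ q : Set.Ioo (0 : ℝ) r,
    (volume (Metric.ball (0 : Ed d) q)).toReal⁻¹ *
      ∫ z in Metric.ball (0 : Ed d) (q : ℝ), ‖z‖ ^ (τ : ℝ) * g (x + z)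

/-- The (periodic) ball of radius `Q` around `x`, realized inside the fundamental domain
centered at `x` (on which the periodic distance agrees with the Euclidean one). -/
def pBall {d : ℕ} (x : Ed d) (Q : ℝ) : Set (Ed d) :=
  {z | (∀ i, |z i - x i| ≤ 1 / 2) ∧ perDist x z < Q}

/-- Mollification `ρ_R = ρ * φ_R` at scale `R`, with `φ_R(z) = R^{-d} φ(z/R)`. -/
def mollify {d : ℕ} (φ ρ : Ed d → ℝ) (R : ℝ) (x : Ed d) : ℝ :=
  ∫ z, ((R ^ d)⁻¹ * φ (R⁻¹ • z)) * ρ (x - z)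


section AuxLemmas
open Metric Set

variable {d : ℕ}


lemma intVec_zero : intVec d (fun _ => 0) = 0 := by
  ext i; simp [intVec]

lemma perDist_eq_norm {x z : Ed d} (h : ∀ i, |z i - x i| ≤ 1 / 2) :
    perDist x z = ‖x - z‖ := by
  unfold perDist
  apply le_antisymm
  · have h0 : ‖x - z + intVec d (fun _ => 0)‖ = ‖x - z‖ := by rw [intVec_zero, add_zero]
    exact h0 ▸ ciInf_le ⟨0, by rintro c ⟨n, rfl⟩; exact norm_nonneg _⟩ _
  · refine le_ciInf fun n => ?_
    rw [EuclideanSpace.norm_eq, EuclideanSpace.norm_eq]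
    apply Real.sqrt_le_sqrt
    apply Finset.sum_le_sum
    intro i _
    have hxz : (x - z) i = x i - z i := rfl
    have hadd : (x - z + intVec d n) i = (x i - z i) + (n i : ℝ) := by simp [intVec]
    rw [hxz, hadd, Real.norm_eq_abs, Real.norm_eq_abs]
    have hi := h i
    rw [abs_sub_comm] at hi
    have hcoord : |x i - z i| ≤ |x i - z i + (n i : ℝ)| := by
      rcases eq_or_ne (n i) 0 with hn | hn
      · simp [hn]
      · have h1 : (1:ℝ) ≤ |(n i : ℝ)| := by exact_mod_cast Int.one_le_abs hn
        have h2 : |(n i : ℝ)| ≤ |x i - z i + (n i : ℝ)| + |x i - z i| := by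
          calc |(n i : ℝ)| = |(x i - z i + (n i : ℝ)) - (x i - z i)| := by ring_nf
            _ ≤ |x i - z i + (n i : ℝ)| + |x i - z i| := abs_sub _ _
        linarith
    have h3 : (0:ℝ) ≤ |x i - z i| := abs_nonneg _
    nlinarith

lemma pBall_subset {x : Ed d} {Q : ℝ} : pBall x Q ⊆ Metric.ball x Q := by
  rintro z ⟨hbox, hlt⟩
  rw [mem_ball, dist_eq_norm, ← norm_sub_rev]
  rw [← perDist_eq_norm hbox]
  exact hlt

lemma measurableSet_pBall (x : Ed d) (Q : ℝ) : MeasurableSet (pBall x Q) := by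
  have h1 : MeasurableSet {z : Ed d | ∀ i, |z i - x i| ≤ 1/2} := by
    rw [Set.setOf_forall]
    apply MeasurableSet.iInter
    intro i
    exact measurableSet_le
      (Continuous.measurable (by fun_prop)) measurable_const
  have h2 : Measurable fun z : Ed d => perDist x z := by
    apply Measurable.iInf
    intro n
    exact (((continuous_const.sub continuous_id).add continuous_const).norm).measurable
  exact h1.inter (measurableSet_lt h2 measurable_const)

lemma norm_gradient_eq {d : ℕ} (f : Ed d → ℝ) (y : Ed d) : ‖gradient f y‖ = ‖fderiv ℝ f y‖ :=
  (InnerProductSpace.toDual ℝ (Ed d)).symm.norm_map _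

lemma gradNorm_continuous {f : Ed d → ℝ} (hf : ContDiff ℝ (⊤ : ℕ∞) f) :
    Continuous fun z : Ed d => ‖gradient f z‖ := by
  have h1 : Continuous fun z : Ed d => fderiv ℝ f z := hf.continuous_fderiv (by simp)
  exact (((InnerProductSpace.toDual ℝ (Ed d)).symm.continuous).comp h1).norm

lemma fderiv_periodic {f : Ed d → ℝ} (hf : Differentiable ℝ f) (hper : IsPeriodic f)
    (z : Ed d) (n : Fin d → ℤ) : fderiv ℝ f (z + intVec d n) = fderiv ℝ f z := by
  have key : fderiv ℝ (fun y : Ed d => f (y + intVec d n)) z = fderiv ℝ f (z + intVec d n) := by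
    have h1 : HasFDerivAt (fun y : Ed d => y + intVec d n)
        (ContinuousLinearMap.id ℝ (Ed d)) z := (hasFDerivAt_id z).add_const _
    have h2 := ((hf (z + intVec d n)).hasFDerivAt.comp z h1)
    exact h2.fderiv
  have hfe : (fun y : Ed d => f (y + intVec d n)) = f := funext fun y => hper y n
  rw [← key, hfe]

lemma gradNorm_bound {f : Ed d → ℝ} (hf : ContDiff ℝ (⊤ : ℕ∞) f) (hper : IsPeriodic f) :
    ∃ K : ℝ, ∀ z, ‖gradient f z‖ ≤ K := by
  obtain ⟨K, hK⟩ := (isCompact_closedBall (0 : Ed d) (Real.sqrt d)).exists_bound_of_continuousOn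
    (gradNorm_continuous hf).continuousOn
  refine ⟨K, fun z => ?_⟩
  set n : Fin d → ℤ := fun i => -⌊z i⌋ with hn
  have hz' : z + intVec d n ∈ closedBall (0 : Ed d) (Real.sqrt d) := by
    rw [mem_closedBall, dist_zero_right, EuclideanSpace.norm_eq]
    have hb : ∀ i, ‖(z + intVec d n) i‖ ^ 2 ≤ 1 := by
      intro i
      have he : (z + intVec d n) i = Int.fract (z i) := by
        have : (z + intVec d n) i = z i + ((n i : ℤ) : ℝ) := by simp [intVec]
        rw [this, hn]
        push_cast
        rw [Int.fract]
        ring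
      rw [he, Real.norm_eq_abs, abs_of_nonneg (Int.fract_nonneg _)]
      have h1 := Int.fract_lt_one (z i)
      have h0 := Int.fract_nonneg (z i)
      nlinarith
    calc Real.sqrt (∑ i, ‖(z + intVec d n) i‖ ^ 2)
        ≤ Real.sqrt (∑ _i : Fin d, (1:ℝ)) :=
          Real.sqrt_le_sqrt (Finset.sum_le_sum fun i _ => hb i)
      _ = Real.sqrt d := by simp
  have hgper : ‖gradient f (z + intVec d n)‖ = ‖gradient f z‖ := by
    rw [norm_gradient_eq, norm_gradient_eq, fderiv_periodic (hf.differentiable (by simp)) hper]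
  calc ‖gradient f z‖ = ‖gradient f (z + intVec d n)‖ := hgper.symm
    _ ≤ ‖‖gradient f (z + intVec d n)‖‖ := le_abs_self _
    _ ≤ K := hK _ hz'

lemma wMax_bounds {r τ : ℝ} (hr : 0 < r) (hr1 : r ≤ 1) (hτ : 0 ≤ τ) {g : Ed d → ℝ}
    (hgc : Continuous g) (hg0 : ∀ z, 0 ≤ g z) {K : ℝ} (hgK : ∀ z, g z ≤ K) (x : Ed d) :
    0 ≤ wMax r τ g x ∧ ∀ q : Set.Ioo (0:ℝ) r,
      (volume (Metric.ball (0 : Ed d) q)).toReal⁻¹ *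
        ∫ z in Metric.ball (0 : Ed d) (q : ℝ), ‖z‖ ^ (τ : ℝ) * g (x + z) ≤ wMax r τ g x := by
  have hK0 : 0 ≤ K := (hg0 x).trans (hgK x)
  have hcont : Continuous fun z : Ed d => ‖z‖ ^ (τ : ℝ) * g (x + z) :=
    (continuous_norm.rpow_const fun z => Or.inr hτ).mul
      (hgc.comp (continuous_const.add continuous_id))
  have hbdd : BddAbove (Set.range fun q : Set.Ioo (0:ℝ) r =>
      (volume (Metric.ball (0 : Ed d) q)).toReal⁻¹ *
        ∫ z in Metric.ball (0 : Ed d) (q : ℝ), ‖z‖ ^ (τ : ℝ) * g (x + z)) := by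
    refine ⟨K, ?_⟩
    rintro c ⟨q, rfl⟩
    obtain ⟨hq0, hqr⟩ := q.2
    set v := (volume (Metric.ball (0 : Ed d) (q:ℝ))).toReal with hv
    have hvpos : 0 < v :=
      ENNReal.toReal_pos (measure_ball_pos _ _ hq0).ne' measure_ball_lt_top.ne
    have hIle : (∫ z in Metric.ball (0 : Ed d) (q : ℝ), ‖z‖ ^ (τ : ℝ) * g (x + z)) ≤ K * v := by
      have hmono : (∫ z in Metric.ball (0 : Ed d) (q : ℝ), ‖z‖ ^ (τ : ℝ) * g (x + z))
          ≤ ∫ _z in Metric.ball (0 : Ed d) (q : ℝ), K := by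
        apply setIntegral_mono_on
        · exact (hcont.locallyIntegrable.integrableOn_isCompact
            (isCompact_closedBall 0 (q:ℝ))).mono_set ball_subset_closedBall
        · exact integrableOn_const measure_ball_lt_top.ne
        · exact measurableSet_ball
        · intro z hz
          have h1 : ‖z‖ ^ (τ:ℝ) ≤ 1 :=
            Real.rpow_le_one (norm_nonneg z)
              ((mem_ball_zero_iff.1 hz).le.trans (hqr.le.trans hr1)) hτ
          calc ‖z‖ ^ (τ:ℝ) * g (x + z) ≤ 1 * K :=
                mul_le_mul h1 (hgK _) (hg0 _) zero_le_one
            _ = K := one_mul K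
      calc (∫ z in Metric.ball (0 : Ed d) (q : ℝ), ‖z‖ ^ (τ : ℝ) * g (x + z))
          ≤ ∫ _z in Metric.ball (0 : Ed d) (q : ℝ), K := hmono
        _ = K * v := by rw [setIntegral_const, smul_eq_mul, mul_comm]; rfl
    calc v⁻¹ * (∫ z in Metric.ball (0 : Ed d) (q : ℝ), ‖z‖ ^ (τ : ℝ) * g (x + z))
        ≤ v⁻¹ * (K * v) := mul_le_mul_of_nonneg_left hIle (inv_nonneg.2 hvpos.le)
      _ = K := by field_simp
  constructor
  · have q0 : Set.Ioo (0:ℝ) r := ⟨r/2, by constructor <;> linarith⟩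
    have h1 : (0:ℝ) ≤ (volume (Metric.ball (0 : Ed d) (q0:ℝ))).toReal⁻¹ *
        ∫ z in Metric.ball (0 : Ed d) (q0 : ℝ), ‖z‖ ^ (τ : ℝ) * g (x + z) :=
      mul_nonneg (inv_nonneg.2 ENNReal.toReal_nonneg)
        (setIntegral_nonneg measurableSet_ball fun z _ =>
          mul_nonneg (Real.rpow_nonneg (norm_nonneg _) _) (hg0 _))
    exact h1.trans (le_ciSup hbdd q0)
  · intro q
    exact le_ciSup hbdd q

lemma ftc_bound {f : Ed d → ℝ} (hf : ContDiff ℝ (⊤ : ℕ∞) f) (x v : Ed d) :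
    |f x - f (x + v)| ≤ ‖v‖ * ∫ t in Set.Ioc (0:ℝ) 1, ‖gradient f (x + t • v)‖ := by
  have hdiff := hf.differentiable (by simp)
  have hpathc : Continuous fun t : ℝ => x + t • v :=
    continuous_const.add (continuous_id.smul continuous_const)
  set φ' : ℝ → ℝ := fun t => fderiv ℝ f (x + t • v) v with hφ'
  have hpath : ∀ t : ℝ, HasDerivAt (fun s : ℝ => x + s • v) v t := by
    intro t
    simpa using ((hasDerivAt_id t).smul_const v).const_add x
  have hd : ∀ t : ℝ, HasDerivAt (fun s => f (x + s • v)) (φ' t) t := fun t =>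
    (hdiff (x + t • v)).hasFDerivAt.comp_hasDerivAt t (hpath t)
  have hφ'c : Continuous φ' := by
    have h1 : Continuous fun t : ℝ => fderiv ℝ f (x + t • v) :=
      (hf.continuous_fderiv (by simp)).comp hpathc
    exact (ContinuousLinearMap.apply ℝ ℝ v).continuous.comp h1
  have hgc : Continuous fun t : ℝ => ‖gradient f (x + t • v)‖ := by
    have h1 : Continuous fun z : Ed d => fderiv ℝ f z := hf.continuous_fderiv (by simp)
    exact ((((InnerProductSpace.toDual ℝ (Ed d)).symm.continuous).comp h1).norm).comp hpathc
  have hint : IntervalIntegrable φ' volume 0 1 := hφ'c.intervalIntegrable 0 1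
  have heq : ∫ t in (0:ℝ)..1, φ' t = f (x + v) - f x := by
    have h2 := intervalIntegral.integral_eq_sub_of_hasDerivAt (fun t _ => hd t) hint
    simpa using h2
  have habs : |f x - f (x + v)| = |∫ t in (0:ℝ)..1, φ' t| := by rw [heq, abs_sub_comm]
  rw [habs]
  calc |∫ t in (0:ℝ)..1, φ' t| ≤ ∫ t in (0:ℝ)..1, |φ' t| :=
        intervalIntegral.abs_integral_le_integral_abs zero_le_one
    _ ≤ ∫ t in (0:ℝ)..1, ‖gradient f (x + t • v)‖ * ‖v‖ := by
        apply intervalIntegral.integral_mono_on zero_le_one hint.abs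
          ((hgc.mul continuous_const).intervalIntegrable 0 1)
        intro t _
        have h1 : |φ' t| ≤ ‖fderiv ℝ f (x + t • v)‖ * ‖v‖ := by
          have := (fderiv ℝ f (x + t • v)).le_opNorm v
          simpa [Real.norm_eq_abs] using this
        simp only [Pi.mul_apply]
        rwa [norm_gradient_eq]
    _ = (∫ t in (0:ℝ)..1, ‖gradient f (x + t • v)‖) * ‖v‖ :=
        intervalIntegral.integral_mul_const _ _
    _ = ‖v‖ * ∫ t in Set.Ioc (0:ℝ) 1, ‖gradient f (x + t • v)‖ := by
        rw [intervalIntegral.integral_of_le zero_le_one, mul_comm]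

end AuxLemmas

open Metric Set

set_option maxHeartbeats 2000000 in
/-- the averaged Hölder quotient is controlled by the weighted local
maximal function of the gradient. -/
theorem average_le_wMax (d : ℕ) (θ : ℝ) (hθ0 : 0 < θ) (hθ1 : θ ≤ 1) :
    ∃ C : ℝ, 0 < C ∧
      ∀ f : Ed d → ℝ, ContDiff ℝ (⊤ : ℕ∞) f → IsPeriodic f →
      ∀ Q r : ℝ, 0 < Q → Q ≤ r → r ≤ 1 →
      ∀ x : Ed d,
        (Q ^ d)⁻¹ * (∫ z in pBall x Q, |f x - f z| / perDist x z ^ θ) ≤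
          C * wMax r (1 - θ) (fun z => ‖gradient f z‖) x := by
  rcases Nat.eq_zero_or_pos d with hd | hd
  · subst hd
    refine ⟨1, one_pos, fun f hf hper Q r hQ hQr hr1 x => ?_⟩
    haveI : Subsingleton (Ed 0) := ⟨fun a b => by ext i; exact i.elim0⟩
    have h0 : ∀ z : Ed 0, |f x - f z| / perDist x z ^ θ = 0 := fun z => by
      rw [Subsingleton.elim z x]; simp
    have hz : (∫ z in pBall x Q, |f x - f z| / perDist x z ^ θ) = 0 := by
      simp only [h0, integral_zero]
    rw [hz, mul_zero]
    obtain ⟨K, hK⟩ := gradNorm_bound hf hper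
    have hw := (wMax_bounds (τ := 1 - θ) (lt_of_lt_of_le hQ hQr) hr1 (by linarith)
      (gradNorm_continuous hf) (fun z => norm_nonneg _) hK x).1
    linarith
  · haveI : Nontrivial (Ed d) := Module.nontrivial_of_finrank_pos
      (R := ℝ) (by rw [finrank_euclideanSpace_fin]; exact hd)
    set ω := (volume (Metric.ball (0 : Ed d) 1)).toReal with hω
    have hωpos : 0 < ω :=
      ENNReal.toReal_pos (measure_ball_pos _ _ one_pos).ne' measure_ball_lt_top.ne
    refine ⟨ω / θ, div_pos hωpos hθ0, fun f hf hper Q r hQ hQr hr1 x => ?_⟩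
    have hQ1 : Q ≤ 1 := hQr.trans hr1
    have hr0 : 0 < r := lt_of_lt_of_le hQ hQr
    have hτ0 : (0:ℝ) ≤ 1 - θ := by linarith
    have hgc : Continuous fun z : Ed d => ‖gradient f z‖ := gradNorm_continuous hf
    obtain ⟨K, hK⟩ := gradNorm_bound hf hper
    have hg0 : ∀ z : Ed d, (0:ℝ) ≤ ‖gradient f z‖ := fun z => norm_nonneg _
    have hK0 : 0 ≤ K := (hg0 x).trans (hK x)
    obtain ⟨hA0, hAle⟩ := wMax_bounds (τ := 1 - θ) hr0 hr1 hτ0 hgc hg0 hK x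
    set A := wMax r (1 - θ) (fun z : Ed d => ‖gradient f z‖) x with hA
    -- bound on the time integral of the gradient along segments
    have hIocK : ∀ v : Ed d, (∫ t in Set.Ioc (0:ℝ) 1, ‖gradient f (x + t • v)‖) ≤ K := by
      intro v
      have hc : Continuous fun t : ℝ => ‖gradient f (x + t • v)‖ :=
        hgc.comp (continuous_const.add (continuous_id.smul continuous_const))
      have h1 : (∫ t in Set.Ioc (0:ℝ) 1, ‖gradient f (x + t • v)‖)
          ≤ ∫ _t in Set.Ioc (0:ℝ) 1, K := by
        apply setIntegral_mono_on hc.integrableOn_Ioc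
          (integrableOn_const (by simp [Real.volume_Ioc]))
          measurableSet_Ioc
        exact fun t _ => hK _
      have h2 : (∫ _t in Set.Ioc (0:ℝ) 1, K) = K := by
        simp [Real.volume_Ioc]
      linarith
    -- properties of the Euclidean quotient integrand
    have hh'0 : ∀ z : Ed d, 0 ≤ |f x - f z| / ‖x - z‖ ^ θ := fun z =>
      div_nonneg (abs_nonneg _) (Real.rpow_nonneg (norm_nonneg _) _)
    have hh'K : ∀ z ∈ Metric.ball x Q, |f x - f z| / ‖x - z‖ ^ θ ≤ K := by
      intro z hz
      rcases eq_or_ne z x with rfl | hne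
      · simpa using hK0
      · have hvne : x - z ≠ 0 := sub_ne_zero.2 fun h => hne h.symm
        have hnp : 0 < ‖x - z‖ := norm_pos_iff.2 hvne
        have hle1 : ‖x - z‖ ≤ 1 := by
          have h1 : dist z x < Q := mem_ball.1 hz
          rw [dist_eq_norm, norm_sub_rev] at h1
          linarith
        have hub : |f x - f z| ≤ ‖x - z‖ * K := by
          have h1 := ftc_bound hf x (z - x)
          have h2 : x + (z - x) = z := by abel
          rw [h2, norm_sub_rev z x] at h1
          exact h1.trans (mul_le_mul_of_nonneg_left (hIocK (z - x)) hnp.le)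
        rw [div_le_iff₀ (Real.rpow_pos_of_pos hnp θ)]
        calc |f x - f z| ≤ ‖x - z‖ * K := hub
          _ ≤ ‖x - z‖ ^ θ * K := by
              have : ‖x - z‖ ≤ ‖x - z‖ ^ θ := by
                conv_lhs => rw [← Real.rpow_one ‖x - z‖]
                exact Real.rpow_le_rpow_of_exponent_ge hnp hle1 hθ1
              exact mul_le_mul_of_nonneg_right this hK0
          _ = K * ‖x - z‖ ^ θ := mul_comm _ _
    have hh'meas : Measurable fun z : Ed d => |f x - f z| / ‖x - z‖ ^ θ := by
      have h1 : Measurable fun z : Ed d => |f x - f z| :=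
        ((continuous_const.sub hf.continuous).abs).measurable
      have h2 : Measurable fun z : Ed d => ‖x - z‖ ^ θ :=
        ((continuous_const.sub continuous_id).norm.measurable).pow_const θ
      exact h1.div h2
    have hh'int : IntegrableOn (fun z : Ed d => |f x - f z| / ‖x - z‖ ^ θ)
        (Metric.ball x Q) := by
      apply Integrable.mono' (g := fun _ => K)
        (integrableOn_const measure_ball_lt_top.ne)
        (hh'meas.aestronglyMeasurable.restrict)
      refine (ae_restrict_mem measurableSet_ball).mono fun z hz => ?_
      rw [Real.norm_eq_abs, abs_of_nonneg (hh'0 z)]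
      exact hh'K z hz
    -- step 1: congruence and monotone enlargement of the domain
    have hT0 : (∫ z in pBall x Q, |f x - f z| / perDist x z ^ θ)
        = ∫ z in pBall x Q, |f x - f z| / ‖x - z‖ ^ θ := by
      apply setIntegral_congr_fun (measurableSet_pBall x Q)
      intro z hz
      simp only [perDist_eq_norm hz.1]
    have hT01 : (∫ z in pBall x Q, |f x - f z| / ‖x - z‖ ^ θ)
        ≤ ∫ z in Metric.ball x Q, |f x - f z| / ‖x - z‖ ^ θ :=
      setIntegral_mono_set hh'int (ae_of_all _ hh'0)
        (HasSubset.Subset.eventuallyLE pBall_subset)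
    -- step 2: translation
    have htrans : (∫ z in Metric.ball x Q, |f x - f z| / ‖x - z‖ ^ θ)
        = ∫ v in Metric.ball (0:Ed d) Q, |f x - f (x + v)| / ‖v‖ ^ θ := by
      have hmp : MeasurePreserving (fun v : Ed d => x + v) volume volume :=
        measurePreserving_add_left volume x
      have hemb : MeasurableEmbedding (fun v : Ed d => x + v) :=
        (Homeomorph.addLeft x).measurableEmbedding
      have hkey := hmp.setIntegral_preimage_emb hemb
        (fun z => |f x - f z| / ‖x - z‖ ^ θ) (Metric.ball x Q)
      rw [← hkey]
      have hpre : (fun v : Ed d => x + v) ⁻¹' Metric.ball x Q = Metric.ball (0:Ed d) Q := by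
        ext v
        simp [Metric.mem_ball, dist_eq_norm]
      rw [hpre]
      apply setIntegral_congr_fun measurableSet_ball
      intro v _
      simp only [show x - (x + v) = -v from by abel, norm_neg]
    -- step 3: pointwise bound by the parametric integrand
    set G : Ed d × ℝ → ℝ :=
      fun p => ‖p.1‖ ^ (1 - θ : ℝ) * ‖gradient f (x + p.2 • p.1)‖ with hG
    set F : Ed d → ℝ :=
      fun v => ‖v‖ ^ (1 - θ : ℝ) * ∫ t in Set.Ioc (0:ℝ) 1, ‖gradient f (x + t • v)‖ with hF
    have hP2 : ∀ v : Ed d, |f x - f (x + v)| / ‖v‖ ^ θ ≤ F v := by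
      intro v
      have hI0 : 0 ≤ ∫ t in Set.Ioc (0:ℝ) 1, ‖gradient f (x + t • v)‖ :=
        setIntegral_nonneg measurableSet_Ioc fun t _ => norm_nonneg _
      rcases eq_or_ne v 0 with rfl | hv
      · have : |f x - f (x + 0)| / ‖(0:Ed d)‖ ^ θ = 0 := by simp
        rw [this]
        exact mul_nonneg (Real.rpow_nonneg (norm_nonneg _) _) hI0
      · have h0 : 0 < ‖v‖ := norm_pos_iff.2 hv
        have h1 : |f x - f (x + v)| ≤ ‖v‖ * ∫ t in Set.Ioc (0:ℝ) 1, ‖gradient f (x + t • v)‖ :=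
          ftc_bound hf x v
        have h2 : |f x - f (x + v)| / ‖v‖ ^ θ
            ≤ (‖v‖ * ∫ t in Set.Ioc (0:ℝ) 1, ‖gradient f (x + t • v)‖) / ‖v‖ ^ θ := by
          gcongr
        refine h2.trans (le_of_eq ?_)
        have h3 : ‖v‖ / ‖v‖ ^ θ = ‖v‖ ^ (1 - θ : ℝ) := by
          rw [Real.rpow_sub h0, Real.rpow_one]
        calc (‖v‖ * ∫ t in Set.Ioc (0:ℝ) 1, ‖gradient f (x + t • v)‖) / ‖v‖ ^ θ
            = (‖v‖ / ‖v‖ ^ θ) * ∫ t in Set.Ioc (0:ℝ) 1, ‖gradient f (x + t • v)‖ := by ring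
          _ = F v := by rw [h3]
    -- step 4: joint integrability and Fubini
    have hGc : Continuous G :=
      ((continuous_fst.norm).rpow_const fun _ => Or.inr hτ0).mul
        (hgc.comp (continuous_const.add (continuous_snd.smul continuous_fst)))
    haveI hfin1 : IsFiniteMeasure (volume.restrict (Metric.ball (0:Ed d) Q)) :=
      ⟨by rw [Measure.restrict_apply_univ]; exact measure_ball_lt_top⟩
    haveI hfin2 : IsFiniteMeasure (volume.restrict (Set.Ioc (0:ℝ) 1)) :=
      ⟨by rw [Measure.restrict_apply_univ]; simp [Real.volume_Ioc]⟩
    have hGint : Integrable G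
        ((volume.restrict (Metric.ball (0:Ed d) Q)).prod (volume.restrict (Set.Ioc (0:ℝ) 1))) := by
      apply Integrable.mono' (g := fun _ => K) (integrable_const K) hGc.aestronglyMeasurable
      rw [Measure.prod_restrict]
      refine (ae_restrict_mem (measurableSet_ball.prod measurableSet_Ioc)).mono ?_
      rintro ⟨v, t⟩ ⟨hv, -⟩
      have h1 : ‖v‖ ^ (1 - θ:ℝ) ≤ 1 :=
        Real.rpow_le_one (norm_nonneg _) ((mem_ball_zero_iff.1 hv).le.trans hQ1) hτ0
      have h2 : (0:ℝ) ≤ G (v, t) :=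
        mul_nonneg (Real.rpow_nonneg (norm_nonneg _) _) (norm_nonneg _)
      rw [Real.norm_eq_abs, abs_of_nonneg h2]
      calc G (v, t) ≤ 1 * K := mul_le_mul h1 (hK _) (norm_nonneg _) zero_le_one
        _ = K := one_mul K
    have hFeq : ∀ v : Ed d,
        F v = ∫ t in Set.Ioc (0:ℝ) 1, G (v, t) := by
      intro v
      rw [hF, hG]
      exact (integral_const_mul _ _).symm
    have hFint : IntegrableOn F (Metric.ball (0:Ed d) Q) :=
      hGint.integral_prod_left.congr (ae_of_all _ fun v => (hFeq v).symm)
    have hT23 : (∫ v in Metric.ball (0:Ed d) Q, |f x - f (x + v)| / ‖v‖ ^ θ)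
        ≤ ∫ v in Metric.ball (0:Ed d) Q, F v :=
      integral_mono_of_nonneg
        (ae_of_all _ fun v => div_nonneg (abs_nonneg _) (Real.rpow_nonneg (norm_nonneg _) _))
        hFint (ae_of_all _ hP2)
    have hswap : (∫ v in Metric.ball (0:Ed d) Q, F v)
        = ∫ t in Set.Ioc (0:ℝ) 1, ∫ v in Metric.ball (0:Ed d) Q, G (v, t) := by
      rw [show (∫ v in Metric.ball (0:Ed d) Q, F v)
          = ∫ v in Metric.ball (0:Ed d) Q, ∫ t in Set.Ioc (0:ℝ) 1, G (v, t) from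
        setIntegral_congr_fun measurableSet_ball fun v _ => hFeq v]
      exact integral_integral_swap hGint
    -- step 5: scaling estimate for each time slice
    have hI_t : ∀ t ∈ Set.Ioo (0:ℝ) 1,
        (∫ v in Metric.ball (0:Ed d) Q, G (v, t)) ≤ t ^ (θ - 1 : ℝ) * (Q ^ d * (ω * A)) := by
      rintro t ⟨ht0, ht1⟩
      have hq : (0:ℝ) < t * Q := mul_pos ht0 hQ
      have hqr : t * Q < r := lt_of_lt_of_le (by nlinarith) hQr
      have hpt : ∀ v : Ed d, G (v, t)
          = t ^ (θ - 1 : ℝ) * (‖t • v‖ ^ (1 - θ : ℝ) * ‖gradient f (x + t • v)‖) := by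
        intro v
        have h1 : ‖t • v‖ = t * ‖v‖ := by
          rw [norm_smul, Real.norm_eq_abs, abs_of_pos ht0]
        have h2 : t ^ (θ - 1 : ℝ) * t ^ (1 - θ : ℝ) = 1 := by
          rw [← Real.rpow_add ht0]; norm_num
        rw [h1, Real.mul_rpow ht0.le (norm_nonneg _), hG]
        simp only
        rw [show t ^ (θ-1:ℝ) * (t ^ (1-θ:ℝ) * ‖v‖ ^ (1-θ:ℝ) * ‖gradient f (x + t • v)‖)
            = (t ^ (θ-1:ℝ) * t ^ (1-θ:ℝ)) * (‖v‖ ^ (1-θ:ℝ) * ‖gradient f (x + t • v)‖) from by ring,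
          h2, one_mul]
      have hstep1 : (∫ v in Metric.ball (0:Ed d) Q, G (v, t))
          = t ^ (θ - 1 : ℝ) * ∫ v in Metric.ball (0:Ed d) Q,
              ‖t • v‖ ^ (1 - θ : ℝ) * ‖gradient f (x + t • v)‖ := by
        rw [← integral_const_mul]
        exact setIntegral_congr_fun measurableSet_ball fun v _ => hpt v
      have hscale : (∫ v in Metric.ball (0:Ed d) Q,
              ‖t • v‖ ^ (1 - θ : ℝ) * ‖gradient f (x + t • v)‖)
          = (t ^ d)⁻¹ * ∫ w in Metric.ball (0:Ed d) (t * Q),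
              ‖w‖ ^ (1 - θ : ℝ) * ‖gradient f (x + w)‖ := by
        have hkey := Measure.setIntegral_comp_smul_of_pos (volume : Measure (Ed d))
          (fun w : Ed d => ‖w‖ ^ (1 - θ : ℝ) * ‖gradient f (x + w)‖)
          (Metric.ball (0:Ed d) Q) ht0
        rw [finrank_euclideanSpace_fin] at hkey
        rw [hkey, smul_eq_mul]
        congr 1
        rw [_root_.smul_ball ht0.ne' (0:Ed d) Q, smul_zero, Real.norm_eq_abs, abs_of_pos ht0]
      have hball_le : (∫ w in Metric.ball (0:Ed d) (t * Q),
              ‖w‖ ^ (1 - θ : ℝ) * ‖gradient f (x + w)‖) ≤ (t * Q) ^ d * ω * A := by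
        have h1 := hAle ⟨t * Q, hq, hqr⟩
        set V := (volume (Metric.ball (0:Ed d) (t * Q))).toReal with hV
        have hVpos : 0 < V :=
          ENNReal.toReal_pos (measure_ball_pos _ _ hq).ne' measure_ball_lt_top.ne
        have h2 : (∫ w in Metric.ball (0:Ed d) (t * Q),
              ‖w‖ ^ (1 - θ : ℝ) * ‖gradient f (x + w)‖)
            = V * (V⁻¹ * ∫ w in Metric.ball (0:Ed d) (t * Q),
              ‖w‖ ^ (1 - θ : ℝ) * ‖gradient f (x + w)‖) := by
          rw [← mul_assoc, mul_inv_cancel₀ hVpos.ne', one_mul]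
        rw [h2]
        have h3 := mul_le_mul_of_nonneg_left h1 hVpos.le
        refine h3.trans (le_of_eq ?_)
        have hVeq : V = (t * Q) ^ d * ω := by
          rw [hV, Measure.addHaar_ball _ _ hq.le, finrank_euclideanSpace_fin,
            ENNReal.toReal_mul, ENNReal.toReal_ofReal (pow_nonneg hq.le _)]
        rw [hVeq, hA]
      calc (∫ v in Metric.ball (0:Ed d) Q, G (v, t))
          = t ^ (θ - 1 : ℝ) * ((t ^ d)⁻¹ * ∫ w in Metric.ball (0:Ed d) (t * Q),
              ‖w‖ ^ (1 - θ : ℝ) * ‖gradient f (x + w)‖) := by rw [hstep1, hscale]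
        _ ≤ t ^ (θ - 1 : ℝ) * ((t ^ d)⁻¹ * ((t * Q) ^ d * ω * A)) := by
            apply mul_le_mul_of_nonneg_left
              (mul_le_mul_of_nonneg_left hball_le (inv_nonneg.2 (pow_nonneg ht0.le d)))
              (Real.rpow_nonneg ht0.le _)
        _ = t ^ (θ - 1 : ℝ) * (Q ^ d * (ω * A)) := by
            rw [mul_pow]
            have htd : (t:ℝ) ^ d ≠ 0 := pow_ne_zero d ht0.ne'
            field_simp
    -- step 6: integrate the time slices
    have hIoo_eq : (volume : Measure ℝ).restrict (Set.Ioo (0:ℝ) 1)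
        = (volume : Measure ℝ).restrict (Set.Ioc (0:ℝ) 1) :=
      Measure.restrict_congr_set Ioo_ae_eq_Ioc
    have hrpow_int : IntegrableOn (fun t : ℝ => t ^ (θ - 1 : ℝ) * (Q ^ d * (ω * A)))
        (Set.Ioo (0:ℝ) 1) := by
      apply Integrable.mul_const
      have h1 : IntervalIntegrable (fun t : ℝ => t ^ (θ - 1 : ℝ)) volume 0 1 :=
        intervalIntegral.intervalIntegrable_rpow' (by linarith)
      have h2 := (intervalIntegrable_iff_integrableOn_Ioc_of_le zero_le_one).1 h1
      exact h2.mono_set Set.Ioo_subset_Ioc_self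
    have hfinal_t : (∫ t in Set.Ioc (0:ℝ) 1, ∫ v in Metric.ball (0:Ed d) Q, G (v, t))
        ≤ (1 / θ) * (Q ^ d * (ω * A)) := by
      have e1 : (∫ t in Set.Ioc (0:ℝ) 1, ∫ v in Metric.ball (0:Ed d) Q, G (v, t))
          = ∫ t in Set.Ioo (0:ℝ) 1, ∫ v in Metric.ball (0:Ed d) Q, G (v, t) := by
        rw [hIoo_eq]
      rw [e1]
      have hmono : (∫ t in Set.Ioo (0:ℝ) 1, ∫ v in Metric.ball (0:Ed d) Q, G (v, t))
          ≤ ∫ t in Set.Ioo (0:ℝ) 1, t ^ (θ - 1 : ℝ) * (Q ^ d * (ω * A)) := by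
        apply integral_mono_of_nonneg
        · exact ae_of_all _ fun t => setIntegral_nonneg measurableSet_ball fun v _ =>
            mul_nonneg (Real.rpow_nonneg (norm_nonneg _) _) (norm_nonneg _)
        · exact hrpow_int
        · exact (ae_restrict_mem measurableSet_Ioo).mono fun t ht => hI_t t ht
      refine hmono.trans (le_of_eq ?_)
      have e2 : (∫ t in Set.Ioo (0:ℝ) 1, t ^ (θ - 1 : ℝ) * (Q ^ d * (ω * A)))
          = (∫ t in Set.Ioc (0:ℝ) 1, t ^ (θ - 1 : ℝ)) * (Q ^ d * (ω * A)) := by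
        rw [hIoo_eq, integral_mul_const]
      have e3 : (∫ t in Set.Ioc (0:ℝ) 1, t ^ (θ - 1 : ℝ)) = 1 / θ := by
        rw [← intervalIntegral.integral_of_le zero_le_one,
          integral_rpow (Or.inl (by linarith))]
        rw [Real.zero_rpow (by linarith : θ - 1 + 1 ≠ 0), Real.one_rpow]
        norm_num
      rw [e2, e3]
    -- assembly
    have hchain : (∫ z in pBall x Q, |f x - f z| / perDist x z ^ θ)
        ≤ (1 / θ) * (Q ^ d * (ω * A)) := by
      rw [hT0]
      refine hT01.trans ?_
      rw [htrans]
      refine hT23.trans ?_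
      rw [hswap]
      exact hfinal_t
    have hQd : (0:ℝ) < Q ^ d := pow_pos hQ d
    calc (Q ^ d : ℝ)⁻¹ * (∫ z in pBall x Q, |f x - f z| / perDist x z ^ θ)
        ≤ (Q ^ d : ℝ)⁻¹ * ((1 / θ) * (Q ^ d * (ω * A))) :=
          mul_le_mul_of_nonneg_left hchain (inv_nonneg.2 hQd.le)
      _ = ω / θ * A := by
          field_simp
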